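/- Every normal 2-program P with n = |At(P)| atoms has at most 3^(n/3) stable models. -/

import Mathlib

open Classical

/-- A normal program rule `head ← pos, not neg`. -/
structure PRule where
  head : ℕ
  pos : Finset ℕ
  neg : Finset ℕ
deriving DecidableEq

/-- `At(P)`: the set of atoms occurring in a normal program. -/
def pAtoms (P : Finset PRule) : Finset ℕ :=
  P.sup (fun r => insert r.head (r.pos ∪ r.neg))

/-- `N` is closed under the rules of the reduct `P^M`: whenever a rule of `P` has no negated
atom in `M` and its positive body is contained in `N`, its head belongs to `N`. -/
def closedUnder (P : Finset PRule) (M : Finset ℕ) (N : Set ℕ) : Prop :=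
  ∀ r ∈ P, (∀ b ∈ r.neg, b ∉ M) → (↑r.pos : Set ℕ) ⊆ N → r.head ∈ N

/-- `M` is a stable model of `P`: `M` equals the least set of atoms closed under the rules of
the reduct `P^M`. -/
def isStable (P : Finset PRule) (M : Finset ℕ) : Prop :=
  closedUnder P M ↑M ∧ ∀ N : Set ℕ, closedUnder P M N → ↑M ⊆ N

/-!
In a 2-program every rule is a fact `c ←`, a rule `c ← a` or a rule `c ← not b`. Hence a stable
model `M` is determined by the negated atoms it contains, and a negated atom `b ∉ M` forces into
`M` every atom reachable by rules `x ← y` from the head of a rule `c ← not b`. After discarding the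
negated atoms that lie in every stable model, the remaining ones omitted by `M` form a maximal
independent set of the graph joining two atoms when one forces the other. So stable models inject
into the maximal independent sets of a graph on at most `n` vertices, and there are at most
`3^(n/3)` of those by the Moon–Moser bound.
-/

theorem Nat.cube_le_three_pow (k : ℕ) : k ^ 3 ≤ 3 ^ k := by
  induction k with
  | zero => norm_num
  | succ n ih =>
    rcases Nat.lt_or_ge n 3 with hn | hn
    · interval_cases n <;> norm_num
    · calc (n + 1) ^ 3 ≤ 3 * n ^ 3 := by nlinarith [Nat.mul_le_mul hn hn]
        _ ≤ 3 * 3 ^ n := by omega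
        _ = 3 ^ (n + 1) := by ring

theorem natCast_le_three_rpow_div_three (k : ℕ) : (k : ℝ) ≤ (3 : ℝ) ^ ((k : ℝ) / 3) := by
  have hcube : ((3 : ℝ) ^ ((k : ℝ) / 3)) ^ 3 = 3 ^ k := by
    rw [← Real.rpow_natCast, ← Real.rpow_mul (by norm_num)]
    norm_num
  refine le_of_pow_le_pow_left₀ (n := 3) (by norm_num) (by positivity) ?_
  rw [hcube]
  exact_mod_cast Nat.cube_le_three_pow k

namespace SimpleGraph

variable {α : Type*} {G : SimpleGraph α}

variable (G) in
noncomputable def closedNbhdIn [DecidableEq α] (V : Finset α) (v : α) : Finset α :=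
  V.filter fun u => G.Adj v u ∨ u = v

variable (G) in
def IsMaximalIndepSetIn (V U : Finset α) : Prop :=
  Maximal (fun s : Finset α => s ⊆ V ∧ G.IsIndepSet ↑s) U

variable (G) in
noncomputable def maximalIndepSetsIn (V : Finset α) : Finset (Finset α) :=
  V.powerset.filter (G.IsMaximalIndepSetIn V)

theorem isMaximalIndepSetIn_iff [DecidableEq α] {V U : Finset α} :
    G.IsMaximalIndepSetIn V U ↔
      U ⊆ V ∧ G.IsIndepSet ↑U ∧ ∀ w ∈ V, w ∉ U → ∃ u ∈ U, G.Adj u w := by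
  constructor
  · rintro ⟨⟨hUV, hU⟩, hmax⟩
    refine ⟨hUV, hU, fun w hwV hwU => ?_⟩
    by_contra! hnone
    have hins : insert w U ⊆ V ∧ G.IsIndepSet ↑(insert w U) := by
      refine ⟨Finset.insert_subset hwV hUV, ?_⟩
      rw [Finset.coe_insert]
      exact hU.insert fun u hu _ => ⟨fun h => hnone u hu h.symm, hnone u hu⟩
    exact hwU (hmax hins (Finset.subset_insert w U) (Finset.mem_insert_self w U))
  · rintro ⟨hUV, hU, hdom⟩
    refine ⟨⟨hUV, hU⟩, fun t ⟨htV, ht⟩ hUt w hwt => ?_⟩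
    by_contra hwU
    obtain ⟨u, huU, huw⟩ := hdom w (htV hwt) hwU
    exact ht (hUt huU) hwt huw.ne huw

theorem mem_maximalIndepSetsIn {V U : Finset α} :
    U ∈ G.maximalIndepSetsIn V ↔ G.IsMaximalIndepSetIn V U := by
  rw [maximalIndepSetsIn, Finset.mem_filter, Finset.mem_powerset, and_iff_right_iff_imp]
  exact fun hU => hU.prop.1

theorem mem_closedNbhdIn [DecidableEq α] {V : Finset α} {v u : α} :
    u ∈ G.closedNbhdIn V v ↔ u ∈ V ∧ (G.Adj v u ∨ u = v) :=
  Finset.mem_filter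

variable [DecidableEq α] {V U : Finset α}

theorem IsMaximalIndepSetIn.exists_mem_closedNbhdIn (hU : G.IsMaximalIndepSetIn V U) {v : α}
    (hv : v ∈ V) : ∃ u ∈ U, u ∈ G.closedNbhdIn V v := by
  obtain ⟨hUV, -, hdom⟩ := isMaximalIndepSetIn_iff.mp hU
  by_cases hvU : v ∈ U
  · exact ⟨v, hvU, mem_closedNbhdIn.mpr ⟨hv, Or.inr rfl⟩⟩
  · obtain ⟨u, huU, huv⟩ := hdom v hv hvU
    exact ⟨u, huU, mem_closedNbhdIn.mpr ⟨hUV huU, Or.inl huv.symm⟩⟩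

theorem IsMaximalIndepSetIn.erase (hU : G.IsMaximalIndepSetIn V U) {u : α} (hu : u ∈ U) :
    G.IsMaximalIndepSetIn (V \ G.closedNbhdIn V u) (U.erase u) := by
  obtain ⟨hUV, hind, hdom⟩ := isMaximalIndepSetIn_iff.mp hU
  refine isMaximalIndepSetIn_iff.mpr ⟨fun w hw => ?_, hind.mono (by simp), fun w hw hwU => ?_⟩
  · obtain ⟨hwu, hwU⟩ := Finset.mem_erase.mp hw
    simp only [Finset.mem_sdiff, mem_closedNbhdIn, not_and, not_or]
    exact ⟨hUV hwU, fun _ => ⟨hind hu hwU hwu.symm, hwu⟩⟩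
  · simp only [Finset.mem_sdiff, mem_closedNbhdIn, not_and, not_or] at hw
    obtain ⟨hwV, hwu⟩ := hw
    obtain ⟨hnadj, hne⟩ := hwu hwV
    obtain ⟨x, hxU, hxw⟩ := hdom w hwV fun h => hwU (Finset.mem_erase.mpr ⟨hne, h⟩)
    have hxu : x ≠ u := by rintro rfl; exact hnadj hxw
    exact ⟨x, Finset.mem_erase.mpr ⟨hxu, hxU⟩, hxw⟩

theorem maximalIndepSetsIn_subset_biUnion {v : α} (hv : v ∈ V) :
    G.maximalIndepSetsIn V ⊆ (G.closedNbhdIn V v).biUnion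
      fun u => (G.maximalIndepSetsIn (V \ G.closedNbhdIn V u)).image (insert u) := by
  intro U hU
  rw [mem_maximalIndepSetsIn] at hU
  obtain ⟨u, huU, hu⟩ := hU.exists_mem_closedNbhdIn hv
  exact Finset.mem_biUnion.mpr ⟨u, hu, Finset.mem_image.mpr
    ⟨U.erase u, mem_maximalIndepSetsIn.mpr (hU.erase huU), Finset.insert_erase huU⟩⟩

/-- The Moon–Moser bound. -/
theorem card_maximalIndepSetsIn_le (V : Finset α) :
    ((G.maximalIndepSetsIn V).card : ℝ) ≤ 3 ^ ((V.card : ℝ) / 3) := by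
  induction V using Finset.strongInduction with
  | H V ih =>
  rcases V.eq_empty_or_nonempty with rfl | hV
  · have : (G.maximalIndepSetsIn ∅).card ≤ 1 := Finset.card_filter_le _ _
    simpa using this
  -- branch on a vertex of minimum closed-neighbourhood size `k`, then use `k ≤ 3^(k/3)`
  obtain ⟨v, hv, hmin⟩ := V.exists_min_image (fun w => (G.closedNbhdIn V w).card) hV
  set k := (G.closedNbhdIn V v).card
  have hbranch : ∀ u ∈ G.closedNbhdIn V v,
      ((G.maximalIndepSetsIn (V \ G.closedNbhdIn V u)).card : ℝ) ≤
        3 ^ (((V.card : ℝ) - k) / 3) := by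
    intro u hu
    have huV : u ∈ V := (mem_closedNbhdIn.mp hu).1
    have hsub : G.closedNbhdIn V u ⊆ V := Finset.filter_subset _ _
    have hself : u ∈ G.closedNbhdIn V u := mem_closedNbhdIn.mpr ⟨huV, Or.inr rfl⟩
    have hcard : ((V \ G.closedNbhdIn V u).card : ℝ) ≤ V.card - k := by
      rw [Finset.card_sdiff_of_subset hsub, Nat.cast_sub (Finset.card_le_card hsub)]
      exact sub_le_sub_left (by exact_mod_cast hmin u huV) _
    refine (ih _ (Finset.sdiff_ssubset hsub ⟨u, hself⟩)).trans ?_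
    exact Real.rpow_le_rpow_of_exponent_le (by norm_num) (by linarith)
  calc ((G.maximalIndepSetsIn V).card : ℝ)
      ≤ ∑ u ∈ G.closedNbhdIn V v,
          ((G.maximalIndepSetsIn (V \ G.closedNbhdIn V u)).card : ℝ) := by
        exact_mod_cast (Finset.card_le_card (maximalIndepSetsIn_subset_biUnion hv)).trans
          (Finset.card_biUnion_le.trans (Finset.sum_le_sum fun u _ => Finset.card_image_le))
    _ ≤ k * 3 ^ (((V.card : ℝ) - k) / 3) := by
        simpa using Finset.sum_le_sum hbranch
    _ ≤ 3 ^ ((k : ℝ) / 3) * 3 ^ (((V.card : ℝ) - k) / 3) := by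
        gcongr
        exact natCast_le_three_rpow_div_three k
    _ = 3 ^ ((V.card : ℝ) / 3) := by
        rw [← Real.rpow_add (by norm_num)]
        ring_nf

end SimpleGraph

def IsTwoProgram (P : Finset PRule) : Prop :=
  ∀ r ∈ P, 1 + r.pos.card + r.neg.card ≤ 2

def PosStep (P : Finset PRule) (a c : ℕ) : Prop :=
  ∃ r ∈ P, r.head = c ∧ a ∈ r.pos ∧ r.neg = ∅

def PosReach (P : Finset PRule) : ℕ → ℕ → Prop :=
  Relation.ReflTransGen (PosStep P)

def IsFactDerived (P : Finset PRule) (c : ℕ) : Prop :=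
  ∃ r ∈ P, r.pos = ∅ ∧ r.neg = ∅ ∧ PosReach P r.head c

def NegArc (P : Finset PRule) (b c : ℕ) : Prop :=
  ∃ r ∈ P, b ∈ r.neg ∧ PosReach P r.head c

def negAtoms (P : Finset PRule) : Finset ℕ :=
  P.sup PRule.neg

/-- The negated atoms whose truth value is not already forced in every stable model. -/
noncomputable def choiceAtoms (P : Finset PRule) : Finset ℕ :=
  (negAtoms P).filter fun b => ¬IsFactDerived P b ∧ ¬NegArc P b b

def negArcGraph (P : Finset PRule) : SimpleGraph ℕ :=
  SimpleGraph.fromRel (NegArc P)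

theorem mem_negAtoms {P : Finset PRule} {b : ℕ} : b ∈ negAtoms P ↔ ∃ r ∈ P, b ∈ r.neg :=
  Finset.mem_sup

theorem choiceAtoms_subset_pAtoms (P : Finset PRule) : choiceAtoms P ⊆ pAtoms P := by
  intro b hb
  obtain ⟨r, hr, hbr⟩ := mem_negAtoms.mp (Finset.mem_filter.mp hb).1
  exact Finset.mem_sup.mpr ⟨r, hr, by simp [hbr]⟩

namespace isStable

variable {P : Finset PRule} {M : Finset ℕ}

theorem mem_of_posReach (hP : IsTwoProgram P) (hM : isStable P M) {a c : ℕ} (ha : a ∈ M)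
    (hac : PosReach P a c) : c ∈ M := by
  induction hac with
  | refl => exact ha
  | tail _ hstep ih =>
    obtain ⟨r, hr, rfl, hbr, hneg⟩ := hstep
    have hpos : r.pos.card ≤ 1 := by have := hP r hr; omega
    refine hM.1 r hr (by simp [hneg]) fun x hx => ?_
    rwa [Finset.mem_coe, Finset.card_le_one.mp hpos x hx _ hbr]

theorem mem_of_isFactDerived (hP : IsTwoProgram P) (hM : isStable P M) {c : ℕ}
    (hc : IsFactDerived P c) : c ∈ M := by
  obtain ⟨r, hr, hpos, hneg, hreach⟩ := hc
  exact hM.mem_of_posReach hP (hM.1 r hr (by simp [hneg]) (by simp [hpos])) hreach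

theorem mem_of_negArc (hP : IsTwoProgram P) (hM : isStable P M) {b c : ℕ} (hb : b ∉ M)
    (hbc : NegArc P b c) : c ∈ M := by
  obtain ⟨r, hr, hbr, hreach⟩ := hbc
  have hcard := hP r hr
  have hneg : r.neg.card ≤ 1 := by omega
  have hpos : r.pos = ∅ := Finset.card_eq_zero.mp (by
    have := Finset.card_pos.mpr ⟨b, hbr⟩
    omega)
  refine hM.mem_of_posReach hP (hM.1 r hr (fun x hx => ?_) (by simp [hpos])) hreach
  rwa [Finset.card_le_one.mp hneg x hx _ hbr]

/-- By minimality of `M`: the atoms justified in this way form a set closed under `P^M`. -/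
theorem isFactDerived_or_exists_negArc (hM : isStable P M) {a : ℕ} (ha : a ∈ M) :
    IsFactDerived P a ∨ ∃ b ∈ negAtoms P, b ∉ M ∧ NegArc P b a := by
  suffices hcl :
      closedUnder P M {a | IsFactDerived P a ∨ ∃ b ∈ negAtoms P, b ∉ M ∧ NegArc P b a} from
    hM.2 _ hcl ha
  intro r hr hneg hpos
  rcases r.neg.eq_empty_or_nonempty with hne | ⟨b, hb⟩
  · rcases r.pos.eq_empty_or_nonempty with hpe | ⟨a, ha⟩
    · exact Or.inl ⟨r, hr, hpe, hne, .refl⟩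
    · have hstep : PosStep P a r.head := ⟨r, hr, rfl, ha, hne⟩
      rcases hpos ha with ⟨r', hr', hp', hn', hreach⟩ | ⟨b, hb, hbM, r', hr', hbr', hreach⟩
      · exact Or.inl ⟨r', hr', hp', hn', hreach.tail hstep⟩
      · exact Or.inr ⟨b, hb, hbM, r', hr', hbr', hreach.tail hstep⟩
  · exact Or.inr ⟨b, mem_negAtoms.mpr ⟨r, hr, hb⟩, hneg b hb, r, hr, hb, .refl⟩

/-- The reduct `P^M` only depends on the negated atoms in `M`. -/
theorem eq_of_forall_negAtoms (hM : isStable P M) {M' : Finset ℕ} (hM' : isStable P M')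
    (h : ∀ b ∈ negAtoms P, b ∈ M ↔ b ∈ M') : M = M' := by
  have hred : ∀ r ∈ P, (∀ b ∈ r.neg, b ∉ M) ↔ (∀ b ∈ r.neg, b ∉ M') := fun r hr =>
    forall₂_congr fun b hb => not_congr (h b (mem_negAtoms.mpr ⟨r, hr, hb⟩))
  refine Finset.coe_injective (subset_antisymm (hM.2 _ ?_) (hM'.2 _ ?_))
  · exact fun r hr hneg => hM'.1 r hr ((hred r hr).mp hneg)
  · exact fun r hr hneg => hM.1 r hr ((hred r hr).mpr hneg)

theorem mem_of_mem_negAtoms_of_notMem_choiceAtoms (hP : IsTwoProgram P) (hM : isStable P M)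
    {b : ℕ} (hb : b ∈ negAtoms P) (hbV : b ∉ choiceAtoms P) : b ∈ M := by
  simp only [choiceAtoms, Finset.mem_filter, hb, true_and, not_and_or, not_not] at hbV
  rcases hbV with hfact | harc
  · exact hM.mem_of_isFactDerived hP hfact
  · by_contra hbM
    exact hbM (hM.mem_of_negArc hP hbM harc)

theorem sdiff_mem_maximalIndepSetsIn (hP : IsTwoProgram P) (hM : isStable P M) :
    choiceAtoms P \ M ∈ (negArcGraph P).maximalIndepSetsIn (choiceAtoms P) := by
  refine SimpleGraph.mem_maximalIndepSetsIn.mpr (SimpleGraph.isMaximalIndepSetIn_iff.mpr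
    ⟨Finset.sdiff_subset, ?_, fun w hwV hwU => ?_⟩)
  · rintro a ha b hb - ⟨-, hab | hba⟩
    · exact (Finset.mem_sdiff.mp hb).2 (hM.mem_of_negArc hP (Finset.mem_sdiff.mp ha).2 hab)
    · exact (Finset.mem_sdiff.mp ha).2 (hM.mem_of_negArc hP (Finset.mem_sdiff.mp hb).2 hba)
  · have hwM : w ∈ M := by simpa [hwV] using hwU
    obtain ⟨-, hwfact, -⟩ := Finset.mem_filter.mp hwV
    rcases hM.isFactDerived_or_exists_negArc hwM with hfact | ⟨b, hb, hbM, hbw⟩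
    · exact absurd hfact hwfact
    · have hbV : b ∈ choiceAtoms P := by
        by_contra hbV
        exact hbM (hM.mem_of_mem_negAtoms_of_notMem_choiceAtoms hP hb hbV)
      exact ⟨b, Finset.mem_sdiff.mpr ⟨hbV, hbM⟩,
        (SimpleGraph.fromRel_adj _ _ _).mpr ⟨fun h => hbM (h ▸ hwM), Or.inl hbw⟩⟩

end isStable

theorem injOn_choiceAtoms_sdiff {P : Finset PRule} (hP : IsTwoProgram P) :
    {M : Finset ℕ | isStable P M}.InjOn (choiceAtoms P \ ·) := by
  intro M hM M' hM' heq
  refine isStable.eq_of_forall_negAtoms hM hM' fun b hb => ?_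
  by_cases hbV : b ∈ choiceAtoms P
  · have := congrArg (b ∈ ·) heq
    simpa [hbV, not_iff_not] using this
  · simp [hM.mem_of_mem_negAtoms_of_notMem_choiceAtoms hP hb hbV,
      isStable.mem_of_mem_negAtoms_of_notMem_choiceAtoms hP hM' hb hbV]

/-- Every normal 2-program `P` (each rule has at most 2 atom occurrences in total) with
`n = |At(P)|` atoms has at most `3^(n/3)` stable models. -/
theorem two_program_stable_models_bound (P : Finset PRule)
    (h2 : ∀ r ∈ P, 1 + r.pos.card + r.neg.card ≤ 2) :
    (({M : Finset ℕ | isStable P M}.ncard : ℝ)) ≤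
      (3 : ℝ) ^ (((pAtoms P).card : ℝ) / 3) := by
  have hcount : {M : Finset ℕ | isStable P M}.ncard ≤
      ((negArcGraph P).maximalIndepSetsIn (choiceAtoms P)).card := by
    rw [← Set.ncard_coe_finset]
    exact Set.ncard_le_ncard_of_injOn _ (fun M hM => hM.sdiff_mem_maximalIndepSetsIn h2)
      (injOn_choiceAtoms_sdiff h2) (Finset.finite_toSet _)
  calc ({M : Finset ℕ | isStable P M}.ncard : ℝ)
      ≤ ((negArcGraph P).maximalIndepSetsIn (choiceAtoms P)).card := by exact_mod_cast hcount
    _ ≤ 3 ^ (((choiceAtoms P).card : ℝ) / 3) := SimpleGraph.card_maximalIndepSetsIn_le _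
    _ ≤ 3 ^ (((pAtoms P).card : ℝ) / 3) := by
        gcongr
        · norm_num
        · exact choiceAtoms_subset_pAtoms P
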